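/- The operator norm of K satisfies ‖K‖ ≤ τ₂; equivalently, for every u ∈ C([0,1],ℝ) and every t ∈ [0,1], |(Ku)(t)| ≤ τ₂·‖u‖∞. -/

import Mathlib

/-!
Since `0 ≤ G(t,s) ≤ Ψ(s)` and `0 ≤ t ≤ 1`, and since `(μ₀ - Λ + 1)/(1 - Λ) = μ₀/(1 - Λ) + 1`,
the kernel satisfies `0 ≤ H(t,s) ≤ Φ(s)` on `[0,1]²`; integrating against `|u| ≤ ‖u‖∞` gives
`|(Ku)(t)| ≤ τ₂ ‖u‖∞`. The function `Φ` is integrable because `g_A`, a parametric integral of the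
jointly continuous Green's function against the Jordan parts of `ν`, is continuous.
-/

open MeasureTheory Set Filter

noncomputable def G (α t s : ℝ) : ℝ :=
  if s ≤ t then (t * (1 - s) ^ (α - 1) - (t - s) ^ (α - 1)) / Real.Gamma α
  else t * (1 - s) ^ (α - 1) / Real.Gamma α

noncomputable def Psi (α s : ℝ) : ℝ := (1 - s) ^ (α - 1) / Real.Gamma α

/-- Integral of `f` over `[0,1]` against the finite signed measure `ν`
(via its Jordan decomposition). -/
noncomputable def stInt (ν : MeasureTheory.SignedMeasure ℝ) (f : ℝ → ℝ) : ℝ :=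
  ∫ t in Icc (0:ℝ) 1, f t ∂ν.toJordanDecomposition.posPart
    - ∫ t in Icc (0:ℝ) 1, f t ∂ν.toJordanDecomposition.negPart

noncomputable def gA (α : ℝ) (ν : MeasureTheory.SignedMeasure ℝ) (s : ℝ) : ℝ :=
  stInt ν (fun t => G α t s)

noncomputable def Lam (η μ₀ β : ℝ) (ν : MeasureTheory.SignedMeasure ℝ) : ℝ :=
  μ₀ * η + β * stInt ν (fun t => t)

noncomputable def Hker (α η μ₀ β : ℝ) (ν : MeasureTheory.SignedMeasure ℝ) (t s : ℝ) : ℝ :=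
  β * t / (1 - Lam η μ₀ β ν) * gA α ν s
    + μ₀ * t / (1 - Lam η μ₀ β ν) * G α η s + G α t s

noncomputable def Phi (α η μ₀ β : ℝ) (ν : MeasureTheory.SignedMeasure ℝ) (s : ℝ) : ℝ :=
  β / (1 - Lam η μ₀ β ν) * gA α ν s
    + (μ₀ - Lam η μ₀ β ν + 1) / (1 - Lam η μ₀ β ν) * Psi α s

noncomputable def rho (α η t : ℝ) : ℝ := (η - η ^ (α - 1)) * (t - t ^ (α - 1))

noncomputable def tau1 (α η μ₀ β : ℝ) (ν : MeasureTheory.SignedMeasure ℝ) : ℝ :=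
  ∫ s in Icc (0:ℝ) 1, rho α η s * Phi α η μ₀ β ν s

noncomputable def tau2 (α η μ₀ β : ℝ) (ν : MeasureTheory.SignedMeasure ℝ) : ℝ :=
  ∫ s in Icc (0:ℝ) 1, Phi α η μ₀ β ν s

lemma G_eq_max (α t s : ℝ) (hα : α ≠ 1) :
    G α t s = (t * (1 - s) ^ (α - 1) - max (t - s) 0 ^ (α - 1)) / Real.Gamma α := by
  rw [G]
  split_ifs with h
  · rw [max_eq_left (by linarith)]
  · rw [max_eq_right (by linarith), Real.zero_rpow (sub_ne_zero.mpr hα), sub_zero]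

lemma continuous_G {α : ℝ} (hα : 1 < α) : Continuous fun p : ℝ × ℝ => G α p.1 p.2 := by
  simp only [G_eq_max _ _ _ hα.ne']
  refine Continuous.div_const (Continuous.sub ?_ ?_) _
  · exact continuous_fst.mul ((continuous_const.sub continuous_snd).rpow_const
      fun _ => Or.inr (by linarith))
  · exact ((continuous_fst.sub continuous_snd).max continuous_const).rpow_const
      fun _ => Or.inr (by linarith)

lemma continuous_Psi {α : ℝ} (hα : 1 ≤ α) : Continuous (Psi α) :=
  ((continuous_const.sub continuous_id).rpow_const fun _ => Or.inr (by linarith)).div_const _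

lemma continuous_stInt {X : Type*} [TopologicalSpace X] [FirstCountableTopology X]
    [LocallyCompactSpace X] (ν : SignedMeasure ℝ) {f : X → ℝ → ℝ}
    (hf : Continuous (Function.uncurry f)) :
    Continuous fun x => stInt ν (f x) :=
  (continuous_parametric_integral_of_continuous hf isCompact_Icc).sub
    (continuous_parametric_integral_of_continuous hf isCompact_Icc)

lemma continuous_gA {α : ℝ} (hα : 1 < α) (ν : SignedMeasure ℝ) : Continuous (gA α ν) :=
  continuous_stInt ν ((continuous_G hα).comp continuous_swap)

lemma continuous_Phi {α : ℝ} (hα : 1 < α) (η μ₀ β : ℝ) (ν : SignedMeasure ℝ) :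
    Continuous (Phi α η μ₀ β ν) :=
  ((continuous_gA hα ν).const_mul _).add ((continuous_Psi hα.le).const_mul _)

lemma G_nonneg {α t s : ℝ} (hα : 2 ≤ α) (ht : t ∈ Icc (0:ℝ) 1) (hs : s ∈ Icc (0:ℝ) 1) :
    0 ≤ G α t s := by
  obtain ⟨ht0, ht1⟩ := ht
  obtain ⟨hs0, hs1⟩ := hs
  have hΓ : 0 < Real.Gamma α := Real.Gamma_pos_of_pos (by linarith)
  rw [G]
  split_ifs with h
  · refine div_nonneg (sub_nonneg.mpr ?_) hΓ.le
    have ht_pow : t ^ (α - 1) ≤ t := by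
      simpa using Real.rpow_le_rpow_of_exponent_ge' ht0 ht1 zero_le_one (by linarith : 1 ≤ α - 1)
    calc (t - s) ^ (α - 1) ≤ (t * (1 - s)) ^ (α - 1) :=
          Real.rpow_le_rpow (by linarith) (by nlinarith) (by linarith)
      _ = t ^ (α - 1) * (1 - s) ^ (α - 1) := Real.mul_rpow ht0 (by linarith)
      _ ≤ t * (1 - s) ^ (α - 1) :=
          mul_le_mul_of_nonneg_right ht_pow (Real.rpow_nonneg (by linarith) _)
  · exact div_nonneg (mul_nonneg ht0 (Real.rpow_nonneg (by linarith) _)) hΓ.le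

lemma G_le_Psi {α t s : ℝ} (hα : 0 < α) (ht : t ≤ 1) (hs : s ≤ 1) : G α t s ≤ Psi α s := by
  have hΓ : 0 ≤ Real.Gamma α := (Real.Gamma_pos_of_pos hα).le
  have hΨ : 0 ≤ (1 - s) ^ (α - 1) := Real.rpow_nonneg (by linarith) _
  rw [G, Psi]
  split_ifs with h
  · have : 0 ≤ (t - s) ^ (α - 1) := Real.rpow_nonneg (by linarith) _
    exact div_le_div_of_nonneg_right (by nlinarith) hΓ
  · exact div_le_div_of_nonneg_right (by nlinarith) hΓ

section Kernel

variable {α η μ₀ β t s : ℝ} {ν : SignedMeasure ℝ}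

lemma Hker_nonneg (hα : 2 ≤ α) (hη : η ∈ Icc (0:ℝ) 1) (hμ : 0 ≤ μ₀) (hβ : 0 ≤ β)
    (hΛ : Lam η μ₀ β ν < 1) (hgA : 0 ≤ gA α ν s) (ht : t ∈ Icc (0:ℝ) 1)
    (hs : s ∈ Icc (0:ℝ) 1) : 0 ≤ Hker α η μ₀ β ν t s := by
  have hD : 0 ≤ 1 - Lam η μ₀ β ν := by linarith
  unfold Hker
  have := G_nonneg hα hη hs
  have := G_nonneg hα ht hs
  have ht0 := ht.1
  positivity

lemma Hker_le_Phi (hα : 2 ≤ α) (hη : η ∈ Icc (0:ℝ) 1) (hμ : 0 ≤ μ₀) (hβ : 0 ≤ β)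
    (hΛ : Lam η μ₀ β ν < 1) (hgA : 0 ≤ gA α ν s) (ht : t ∈ Icc (0:ℝ) 1)
    (hs : s ∈ Icc (0:ℝ) 1) : Hker α η μ₀ β ν t s ≤ Phi α η μ₀ β ν s := by
  have hD : 0 < 1 - Lam η μ₀ β ν := by linarith
  have hα₀ : 0 < α := by linarith
  have hPhi : Phi α η μ₀ β ν s
      = β / (1 - Lam η μ₀ β ν) * gA α ν s + μ₀ / (1 - Lam η μ₀ β ν) * Psi α s + Psi α s := by
    rw [Phi]; field_simp; ring
  have hgA_term : β * t / (1 - Lam η μ₀ β ν) * gA α ν s ≤ β / (1 - Lam η μ₀ β ν) * gA α ν s := by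
    gcongr
    exact mul_le_of_le_one_right hβ ht.2
  have hG_term : μ₀ * t / (1 - Lam η μ₀ β ν) * G α η s ≤ μ₀ / (1 - Lam η μ₀ β ν) * Psi α s := by
    gcongr
    · exact G_nonneg hα hη hs
    · exact mul_le_of_le_one_right hμ ht.2
    · exact G_le_Psi hα₀ hη.2 hs.2
  rw [Hker, hPhi]
  linarith [G_le_Psi (t := t) hα₀ ht.2 hs.2]

end Kernel

lemma abs_le_iSup_abs_of_continuousOn {X : Type*} [TopologicalSpace X] {K : Set X}
    (hK : IsCompact K) {u : X → ℝ} (hu : ContinuousOn u K) {x : X} (hx : x ∈ K) :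
    |u x| ≤ ⨆ y : K, |u y| := by
  have hbdd : BddAbove (range fun y : K => |u y|) := by
    rw [← image_eq_range (fun y => |u y|)]
    exact hK.bddAbove_image hu.abs
  exact le_ciSup hbdd ⟨x, hx⟩

theorem opNorm_K_le_tau2_general (α η μ₀ β : ℝ) (ν : MeasureTheory.SignedMeasure ℝ)
    (hα₁ : 2 < α) (hη : η ∈ Ioo (0:ℝ) 1) (hμ : 0 ≤ μ₀) (hβ : 0 ≤ β)
    (hΛ₁ : Lam η μ₀ β ν < 1)
    (hgA : ∀ s ∈ Icc (0:ℝ) 1, 0 ≤ gA α ν s)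
    (u : ℝ → ℝ) (hu : ContinuousOn u (Icc (0:ℝ) 1)) :
    ∀ t ∈ Icc (0:ℝ) 1,
      |∫ s in Icc (0:ℝ) 1, Hker α η μ₀ β ν t s * u s|
        ≤ tau2 α η μ₀ β ν * ⨆ s : Icc (0:ℝ) 1, |u s| := by
  intro t ht
  set M := ⨆ s : Icc (0:ℝ) 1, |u s|
  have hηI : η ∈ Icc (0:ℝ) 1 := Ioo_subset_Icc_self hη
  have hPhi : IntegrableOn (Phi α η μ₀ β ν) (Icc 0 1) :=
    (continuous_Phi (by linarith) η μ₀ β ν).integrableOn_Icc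
  have hpointwise : ∀ s ∈ Icc (0:ℝ) 1, ‖Hker α η μ₀ β ν t s * u s‖ ≤ Phi α η μ₀ β ν s * M := by
    intro s hs
    have hH₀ := Hker_nonneg hα₁.le hηI hμ hβ hΛ₁ (hgA s hs) ht hs
    have hHΦ := Hker_le_Phi hα₁.le hηI hμ hβ hΛ₁ (hgA s hs) ht hs
    rw [Real.norm_eq_abs, abs_mul, abs_of_nonneg hH₀]
    exact mul_le_mul hHΦ (abs_le_iSup_abs_of_continuousOn isCompact_Icc hu hs) (abs_nonneg _)
      (hH₀.trans hHΦ)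
  calc |∫ s in Icc (0:ℝ) 1, Hker α η μ₀ β ν t s * u s|
      ≤ ∫ s in Icc (0:ℝ) 1, Phi α η μ₀ β ν s * M :=
        norm_integral_le_of_norm_le (hPhi.mul_const M)
          ((ae_restrict_iff' measurableSet_Icc).mpr (.of_forall hpointwise))
    _ = tau2 α η μ₀ β ν * M := integral_mul_const M _

/-- `‖K‖ ≤ τ₂`: for every continuous `u` on `[0,1]` and every `t ∈ [0,1]`,
`|(Ku)(t)| ≤ τ₂ · ‖u‖∞`. -/
theorem opNorm_K_le_tau2 (α η μ₀ β : ℝ) (ν : MeasureTheory.SignedMeasure ℝ)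
    (hα₁ : 2 < α) (hα₂ : α ≤ 3) (hη : η ∈ Ioo (0:ℝ) 1) (hμ : 0 ≤ μ₀) (hβ : 0 ≤ β)
    (hΛ₀ : 0 ≤ Lam η μ₀ β ν) (hΛ₁ : Lam η μ₀ β ν < 1)
    (hgA : ∀ s ∈ Icc (0:ℝ) 1, 0 ≤ gA α ν s)
    (u : ℝ → ℝ) (hu : ContinuousOn u (Icc (0:ℝ) 1)) :
    ∀ t ∈ Icc (0:ℝ) 1,
      |∫ s in Icc (0:ℝ) 1, Hker α η μ₀ β ν t s * u s|
        ≤ tau2 α η μ₀ β ν * ⨆ s : Icc (0:ℝ) 1, |u s| :=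
  opNorm_K_le_tau2_general α η μ₀ β ν hα₁ hη hμ hβ hΛ₁ hgA u hu
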